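/- arXiv:1701.02675 — 5 statements merged into one kernel-verified Lean document; each statement's English description precedes it below -/
import Mathlib

section
/- For every u ∈ C^∞_c(Ω), the directional total variation has the closed form DTV^{a,θ}(u) = ∫_Ω ( (D_θ u(x))² + a² (D_{θ⊥} u(x))² )^{1/2} dx, where D_θ u = cosθ · ∂₁u + sinθ · ∂₂u is the directional derivative of u in direction (cosθ, sinθ) and D_{θ⊥} u = −sinθ · ∂₁u + cosθ · ∂₂u is the directional derivative in the orthogonal direction (−sinθ, cosθ). -/
open MeasureTheory Filter
open scoped ENNReal Topology Pointwise

noncomputable section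

abbrev E2 := EuclideanSpace ℝ (Fin 2)

/-- Build a vector of `ℝ²` from its coordinates. -/
def vec2 (x y : ℝ) : E2 := (WithLp.equiv 2 (Fin 2 → ℝ)).symm ![x, y]

/-- The elliptical set `E^{a,θ}`. -/
def Ellip (a θ : ℝ) : Set E2 :=
  {x : E2 | (x 0 * Real.cos θ + x 1 * Real.sin θ) ^ 2 +
      ((-(x 0) * Real.sin θ + x 1 * Real.cos θ) / a) ^ 2 ≤ 1}

/-- Partial derivative in the `i`-th coordinate direction. -/
def pd (i : Fin 2) (f : E2 → ℝ) (x : E2) : ℝ :=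
  fderiv ℝ f x (EuclideanSpace.single i 1)

/-- Divergence of a vector field on `ℝ²`. -/
def divVec (v : E2 → E2) (x : E2) : ℝ :=
  pd 0 (fun y => v y 0) x + pd 1 (fun y => v y 1) x

/-- `C¹` vector fields compactly supported in `Ω`. -/
def Cc1 (Ω : Set E2) (v : E2 → E2) : Prop :=
  ContDiff ℝ 1 v ∧ HasCompactSupport v ∧ tsupport v ⊆ Ω

/-- The directional total variation `DTV^{a,θ}`. -/
def DTV (Ω : Set E2) (a θ : ℝ) (u : E2 → ℝ) : ℝ≥0∞ :=
  ⨆ v ∈ {v : E2 → E2 | Cc1 Ω v ∧ ∀ x ∈ Ω, v x ∈ Ellip a θ},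
    ENNReal.ofReal (∫ x in Ω, u x * divVec v x)

/-- The total variation. -/
def TV (Ω : Set E2) (u : E2 → ℝ) : ℝ≥0∞ :=
  ⨆ v ∈ {v : E2 → E2 | Cc1 Ω v ∧ ∀ x ∈ Ω, ‖v x‖ ≤ 1},
    ENNReal.ofReal (∫ x in Ω, u x * divVec v x)

abbrev Mat2 := Matrix (Fin 2) (Fin 2) ℝ

/-- The rotation matrix `R_θ`. -/
def Rmat (θ : ℝ) : Mat2 := !![Real.cos θ, -Real.sin θ; Real.sin θ, Real.cos θ]

/-- The matrix `Λ_a = diag(1,a)`. -/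
def Lmat (a : ℝ) : Mat2 := !![1, 0; 0, a]

/-- Symmetric `2×2` matrices whose rows and columns lie in `S ⊆ ℝ²`. -/
def rowcol (S : Set E2) : Set Mat2 :=
  {V : Mat2 | V.IsSymm ∧ (∀ i : Fin 2, vec2 (V i 0) (V i 1) ∈ S) ∧
    ∀ j : Fin 2, vec2 (V 0 j) (V 1 j) ∈ S}

/-- `E^{a,θ}_{2×2}`. -/
def EllipM (a θ : ℝ) : Set Mat2 := rowcol (Ellip a θ)

/-- `B_{2×2}`. -/
def BallM : Set Mat2 := rowcol (Metric.closedBall 0 1)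

/-- Divergence of a (symmetric) matrix field. -/
def divMat (W : E2 → Mat2) (x : E2) : E2 :=
  vec2 (pd 0 (fun y => W y 0 0) x + pd 1 (fun y => W y 0 1) x)
    (pd 0 (fun y => W y 1 0) x + pd 1 (fun y => W y 1 1) x)

/-- Second-order divergence of a matrix field. -/
def div2Mat (W : E2 → Mat2) (x : E2) : ℝ :=
  pd 0 (pd 0 (fun y => W y 0 0)) x + pd 1 (pd 1 (fun y => W y 1 1)) x +
    2 * pd 0 (pd 1 (fun y => W y 0 1)) x

/-- `C²` symmetric-matrix fields compactly supported in `Ω`. -/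
def Cc2Sym (Ω : Set E2) (W : E2 → Mat2) : Prop :=
  (∀ i j : Fin 2, ContDiff ℝ 2 (fun x => W x i j)) ∧ HasCompactSupport W ∧
    tsupport W ⊆ Ω ∧ ∀ x, (W x).IsSymm

/-- The second-order directional total generalized variation `DTGV²_λ`. -/
def DTGV2 (Ω : Set E2) (a θ l0 l1 : ℝ) (u : E2 → ℝ) : ℝ≥0∞ :=
  ⨆ W ∈ {W : E2 → Mat2 | Cc2Sym Ω W ∧ (∀ x ∈ Ω, W x ∈ l0 • EllipM a θ) ∧
      ∀ x ∈ Ω, divMat W x ∈ l1 • Ellip a θ},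
    ENNReal.ofReal (∫ x in Ω, u x * div2Mat W x)

/-- The second-order total generalized variation `TGV²_λ`. -/
def TGV2 (Ω : Set E2) (l0 l1 : ℝ) (u : E2 → ℝ) : ℝ≥0∞ :=
  ⨆ W ∈ {W : E2 → Mat2 | Cc2Sym Ω W ∧ (∀ x ∈ Ω, W x ∈ l0 • BallM) ∧
      ∀ x ∈ Ω, divMat W x ∈ Metric.closedBall 0 l1},
    ENNReal.ofReal (∫ x in Ω, u x * div2Mat W x)

namespace DTVAux

lemma vec2_zero : vec2 0 0 = (0 : E2) := by
  ext i; fin_cases i <;> rfl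

lemma pd_zero_of_nmem {f : E2 → ℝ} {x : E2} (hx : x ∉ tsupport f) (i : Fin 2) :
    pd i f x = 0 := by
  have h : fderiv ℝ f x = 0 := by
    have := support_fderiv_subset (𝕜 := ℝ) (f := f)
    by_contra hne
    exact hx (this hne)
  simp [pd, h]

lemma support_pd_subset {f : E2 → ℝ} (i : Fin 2) :
    Function.support (pd i f) ⊆ tsupport f := by
  intro x hx
  by_contra h
  exact hx (pd_zero_of_nmem h i)

lemma hcs_pd {f : E2 → ℝ} (hf : HasCompactSupport f) (i : Fin 2) :
    HasCompactSupport (pd i f) := hf.mono' (support_pd_subset i)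

lemma contDiff_pd {f : E2 → ℝ} (hf : ContDiff ℝ (⊤ : ℕ∞) f) (i : Fin 2) :
    ContDiff ℝ 1 (pd i f) :=
  (hf.fderiv_right (by exact WithTop.coe_le_coe.mpr (le_top : (1 + 1 : ℕ∞) ≤ ⊤))).clm_apply contDiff_const

lemma continuous_pd {f : E2 → ℝ} (hf : ContDiff ℝ 1 f) (i : Fin 2) :
    Continuous (pd i f) :=
  (hf.continuous_fderiv one_ne_zero).clm_apply continuous_const

lemma ibp (f g : E2 → ℝ) (hf : ContDiff ℝ 1 f) (hfs : HasCompactSupport f)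
    (hg : ContDiff ℝ 1 g) (hgs : HasCompactSupport g) (i : Fin 2) :
    ∫ x, f x * pd i g x = -∫ x, pd i f x * g x := by
  obtain ⟨C, hC⟩ := ContDiff.lipschitzWith_of_hasCompactSupport hgs hg one_ne_zero
  obtain ⟨D, hD⟩ := ContDiff.lipschitzWith_of_hasCompactSupport hfs hf one_ne_zero
  have key := LipschitzWith.integral_lineDeriv_mul_eq (μ := volume) hC hD hfs
      (EuclideanSpace.single i 1)
  have hgd := hg.differentiable one_ne_zero
  have hfd := hf.differentiable one_ne_zero
  have h1 : ∀ x : E2, lineDeriv ℝ g x (EuclideanSpace.single i 1) = pd i g x := fun x =>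
    (hgd x).lineDeriv_eq_fderiv
  have h2 : ∀ x : E2, lineDeriv ℝ f x (-(EuclideanSpace.single i 1)) = -pd i f x := fun x => by
    rw [(hfd x).lineDeriv_eq_fderiv, map_neg]; rfl
  calc ∫ x, f x * pd i g x = ∫ x, lineDeriv ℝ g x (EuclideanSpace.single i 1) * f x := by
        simp_rw [h1, mul_comm]
    _ = ∫ x, lineDeriv ℝ f x (-(EuclideanSpace.single i 1)) * g x := key
    _ = ∫ x, -(pd i f x * g x) := by simp_rw [h2, neg_mul]
    _ = -∫ x, pd i f x * g x := integral_neg _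

lemma cauchy_bound {a c s g0 g1 v0 v1 : ℝ} (ha : 0 < a) (hcs : c ^ 2 + s ^ 2 = 1)
    (hv : (v0 * c + v1 * s) ^ 2 + ((-v0 * s + v1 * c) / a) ^ 2 ≤ 1) :
    -(g0 * v0 + g1 * v1) ≤
      Real.sqrt ((c * g0 + s * g1) ^ 2 + a ^ 2 * (-s * g0 + c * g1) ^ 2) := by
  set P := c * g0 + s * g1 with hP
  set Q := -s * g0 + c * g1 with hQ
  set A := v0 * c + v1 * s with hA
  set B := -v0 * s + v1 * c with hB
  have hSnn : (0:ℝ) ≤ P ^ 2 + a ^ 2 * Q ^ 2 := by positivity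
  set T := Real.sqrt (P ^ 2 + a ^ 2 * Q ^ 2) with hT
  have hT0 : 0 ≤ T := Real.sqrt_nonneg _
  have hT2 : T ^ 2 = P ^ 2 + a ^ 2 * Q ^ 2 := Real.sq_sqrt hSnn
  have ha2 : (0:ℝ) < a ^ 2 := by positivity
  have h2 : a ^ 2 * ((B / a) ^ 2) = B ^ 2 := by field_simp
  have hv' : a ^ 2 * A ^ 2 + B ^ 2 ≤ a ^ 2 := by
    have h3 := mul_le_mul_of_nonneg_left hv ha2.le
    rw [mul_add, h2, mul_one] at h3
    linarith
  have h1 : g0 * v0 + g1 * v1 = P * A + Q * B := by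
    rw [hP, hQ, hA, hB]; linear_combination (-(g0 * v0 + g1 * v1)) * hcs
  have key : (g0 * v0 + g1 * v1) ^ 2 ≤ T ^ 2 := by
    rw [h1, hT2]
    nlinarith [sq_nonneg (P * B - a ^ 2 * Q * A), mul_le_mul_of_nonneg_left hv' hSnn, ha2]
  nlinarith [key, hT0]

lemma eps_bound {W ε : ℝ} (hW : 0 ≤ W) (hε : 0 < ε) :
    Real.sqrt W - W / Real.sqrt (W + ε ^ 2) ≤ ε := by
  set S := Real.sqrt W with hS
  set r := Real.sqrt (W + ε ^ 2) with hr
  have hS0 : 0 ≤ S := Real.sqrt_nonneg _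
  have hS2 : S ^ 2 = W := Real.sq_sqrt hW
  have hr0 : 0 < r := Real.sqrt_pos.mpr (by nlinarith)
  have hr2 : r ^ 2 = W + ε ^ 2 := Real.sq_sqrt (by nlinarith)
  have hrle : r ≤ S + ε := by
    have h : W + ε ^ 2 ≤ (S + ε) ^ 2 := by nlinarith
    calc r ≤ Real.sqrt ((S + ε) ^ 2) := Real.sqrt_le_sqrt h
      _ = S + ε := Real.sqrt_sq (by positivity)
  have hD : W / r * r = W := div_mul_cancel₀ _ (ne_of_gt hr0)
  have hD0 : 0 ≤ W / r := div_nonneg hW hr0.le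
  nlinarith [mul_le_mul_of_nonneg_left hrle hD0, hS2, hD, hS0, hε]

lemma div_alg {a c s g0 g1 P Q r : ℝ} (hr0 : r ≠ 0) (hP : P = c * g0 + s * g1)
    (hQ : Q = -s * g0 + c * g1) :
    -(g0 * (-((P * c - a ^ 2 * Q * s) / r)) + g1 * (-((P * s + a ^ 2 * Q * c) / r))) =
      (P ^ 2 + a ^ 2 * Q ^ 2) / r := by
  subst hP hQ; field_simp; ring

lemma ellip_alg {a c s P Q ε r : ℝ} (ha : 0 < a) (hcs : c ^ 2 + s ^ 2 = 1) (hε : 0 < ε)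
    (hr : r = Real.sqrt (P ^ 2 + a ^ 2 * Q ^ 2 + ε ^ 2)) :
    (-((P * c - a ^ 2 * Q * s) / r) * c + -((P * s + a ^ 2 * Q * c) / r) * s) ^ 2 +
      ((-(-((P * c - a ^ 2 * Q * s) / r)) * s + -((P * s + a ^ 2 * Q * c) / r) * c) / a) ^ 2
      ≤ 1 := by
  have hr2 : r ^ 2 = P ^ 2 + a ^ 2 * Q ^ 2 + ε ^ 2 := by
    rw [hr]; exact Real.sq_sqrt (by positivity)
  have hr0 : 0 < r := by
    rw [hr]; apply Real.sqrt_pos.mpr; positivity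
  have hrne : r ≠ 0 := ne_of_gt hr0
  have hane : a ≠ 0 := ne_of_gt ha
  have e1 : (-((P * c - a ^ 2 * Q * s) / r) * c + -((P * s + a ^ 2 * Q * c) / r) * s)
      = -P / r := by
    field_simp
    linear_combination (-P) * hcs
  have e2 : ((-(-((P * c - a ^ 2 * Q * s) / r)) * s + -((P * s + a ^ 2 * Q * c) / r) * c))
      = -(a ^ 2 * Q) / r := by
    field_simp
    linear_combination (-(a ^ 2 * Q)) * hcs
  rw [e1, e2]
  have expand : (-P / r) ^ 2 + (-(a ^ 2 * Q) / r / a) ^ 2 = (P ^ 2 + a ^ 2 * Q ^ 2) / r ^ 2 := by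
    field_simp
  rw [expand, div_le_one (by positivity)]
  rw [hr2]; nlinarith [pow_pos hε 2]

/-- The function `D_θ u`. -/
def Pf (θ : ℝ) (u : E2 → ℝ) (x : E2) : ℝ := Real.cos θ * pd 0 u x + Real.sin θ * pd 1 u x

/-- The function `D_{θ⊥} u`. -/
def Qf (θ : ℝ) (u : E2 → ℝ) (x : E2) : ℝ := -Real.sin θ * pd 0 u x + Real.cos θ * pd 1 u x

/-- The pointwise value of the closed form. -/
def Sf (a θ : ℝ) (u : E2 → ℝ) (x : E2) : ℝ :=
  Real.sqrt (Pf θ u x ^ 2 + a ^ 2 * Qf θ u x ^ 2)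

end DTVAux

namespace DTVAux

lemma Pf_contDiff {θ : ℝ} {u : E2 → ℝ} (hu : ContDiff ℝ (⊤ : ℕ∞) u) : ContDiff ℝ 1 (Pf θ u) :=
  (contDiff_const.mul (contDiff_pd hu 0)).add (contDiff_const.mul (contDiff_pd hu 1))

lemma Qf_contDiff {θ : ℝ} {u : E2 → ℝ} (hu : ContDiff ℝ (⊤ : ℕ∞) u) : ContDiff ℝ 1 (Qf θ u) :=
  (contDiff_const.mul (contDiff_pd hu 0)).add (contDiff_const.mul (contDiff_pd hu 1))

lemma Pf_zero {θ : ℝ} {u : E2 → ℝ} {x : E2} (hx : x ∉ tsupport u) : Pf θ u x = 0 := by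
  simp [Pf, pd_zero_of_nmem hx 0, pd_zero_of_nmem hx 1]

lemma Qf_zero {θ : ℝ} {u : E2 → ℝ} {x : E2} (hx : x ∉ tsupport u) : Qf θ u x = 0 := by
  simp [Qf, pd_zero_of_nmem hx 0, pd_zero_of_nmem hx 1]

lemma Sf_cont {a θ : ℝ} {u : E2 → ℝ} (hu : ContDiff ℝ (⊤ : ℕ∞) u) : Continuous (Sf a θ u) := by
  have hPc : Continuous (Pf θ u) := (Pf_contDiff hu).continuous
  have hQc : Continuous (Qf θ u) := (Qf_contDiff hu).continuous
  exact Real.continuous_sqrt.comp ((hPc.pow 2).add (continuous_const.mul (hQc.pow 2)))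

lemma Sf_supp {a θ : ℝ} {u : E2 → ℝ} :
    Function.support (Sf a θ u) ⊆ tsupport u := by
  intro x hx
  by_contra h
  exact hx (by simp [Sf, Pf_zero h, Qf_zero h])

lemma Sf_hcs {a θ : ℝ} {u : E2 → ℝ} (husupp : HasCompactSupport u) :
    HasCompactSupport (Sf a θ u) := husupp.mono' Sf_supp

lemma comp_contDiff {v : E2 → E2} (hv : ContDiff ℝ 1 v) (j : Fin 2) :
    ContDiff ℝ 1 (fun y => v y j) := contDiff_euclidean.mp hv j

lemma comp_hcs {v : E2 → E2} (hv : HasCompactSupport v) (j : Fin 2) :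
    HasCompactSupport (fun y => v y j) := by
  apply hv.mono'
  intro y hy
  apply subset_tsupport v
  simp only [Function.mem_support] at hy ⊢
  intro h0
  apply hy
  rw [h0]
  rfl

/-- Integration by parts for the divergence. -/
lemma div_ibp (Ω : Set E2) {u : E2 → ℝ}
    (hu1 : ContDiff ℝ 1 u) (husupp : HasCompactSupport u) (hsub : tsupport u ⊆ Ω)
    (v : E2 → E2) (hv1 : ContDiff ℝ 1 v) (hvcs : HasCompactSupport v) :
    ∫ x in Ω, u x * divVec v x = ∫ x in Ω, -(pd 0 u x * v x 0 + pd 1 u x * v x 1) := by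
  have int1 : ∀ j : Fin 2, Integrable (fun x => u x * pd j (fun y => v y j) x) := fun j =>
    (hu1.continuous.mul (continuous_pd (comp_contDiff hv1 j) j)).integrable_of_hasCompactSupport
      husupp.mul_right
  have int2 : ∀ j : Fin 2, Integrable (fun x => pd j u x * v x j) := fun j =>
    ((continuous_pd hu1 j).mul ((comp_contDiff hv1 j).continuous)).integrable_of_hasCompactSupport
      ((hcs_pd husupp j).mul_right)
  have step1 : ∫ x in Ω, u x * divVec v x = ∫ x, u x * divVec v x :=
    setIntegral_eq_integral_of_forall_compl_eq_zero (fun x hx => by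
      rw [image_eq_zero_of_notMem_tsupport (fun h => hx (hsub h)), zero_mul])
  have step2 : ∫ x, u x * divVec v x =
      (∫ x, u x * pd 0 (fun y => v y 0) x) + ∫ x, u x * pd 1 (fun y => v y 1) x := by
    rw [← integral_add (int1 0) (int1 1)]
    congr 1
    funext x
    simp [divVec, mul_add]
  have step3a := ibp u (fun y => v y 0) hu1 husupp (comp_contDiff hv1 0) (comp_hcs hvcs 0) 0
  have step3b := ibp u (fun y => v y 1) hu1 husupp (comp_contDiff hv1 1) (comp_hcs hvcs 1) 1
  have step4 : (∫ x, u x * pd 0 (fun y => v y 0) x) + (∫ x, u x * pd 1 (fun y => v y 1) x)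
      = ∫ x, -(pd 0 u x * v x 0 + pd 1 u x * v x 1) := by
    rw [step3a, step3b, ← neg_add, ← integral_add (int2 0) (int2 1), ← integral_neg]
  have step5 : ∫ x, -(pd 0 u x * v x 0 + pd 1 u x * v x 1)
      = ∫ x in Ω, -(pd 0 u x * v x 0 + pd 1 u x * v x 1) :=
    (setIntegral_eq_integral_of_forall_compl_eq_zero (fun x hx => by
      rw [pd_zero_of_nmem (fun h => hx (hsub h)) 0,
        pd_zero_of_nmem (fun h => hx (hsub h)) 1]
      ring)).symm
  rw [step1, step2, step4, step5]

/-- Upper bound. -/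
lemma upper (Ω : Set E2) (hΩo : IsOpen Ω) {a θ : ℝ} (ha : 0 < a) {u : E2 → ℝ}
    (hu : ContDiff ℝ (⊤ : ℕ∞) u) (husupp : HasCompactSupport u) (hsub : tsupport u ⊆ Ω)
    (v : E2 → E2) (hv : Cc1 Ω v) (hvE : ∀ x ∈ Ω, v x ∈ Ellip a θ) :
    ∫ x in Ω, u x * divVec v x ≤ ∫ x in Ω, Sf a θ u x := by
  obtain ⟨hv1, hvcs, hvsub⟩ := hv
  have hu1 : ContDiff ℝ 1 u := hu.of_le (by simp)
  rw [div_ibp Ω hu1 husupp hsub v hv1 hvcs]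
  have int2 : ∀ j : Fin 2, Integrable (fun x => pd j u x * v x j) := fun j =>
    ((continuous_pd hu1 j).mul ((comp_contDiff hv1 j).continuous)).integrable_of_hasCompactSupport
      ((hcs_pd husupp j).mul_right)
  apply setIntegral_mono_on (((int2 0).add (int2 1)).neg.integrableOn)
    (((Sf_cont hu).integrable_of_hasCompactSupport (Sf_hcs husupp)).integrableOn)
    hΩo.measurableSet
  intro x hx
  have hmem := hvE x hx
  simp only [Ellip, Set.mem_setOf_eq] at hmem
  exact cauchy_bound ha (Real.cos_sq_add_sin_sq θ) hmem

/-- The regularized radius function. -/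
def rF (a θ ε : ℝ) (u : E2 → ℝ) (x : E2) : ℝ :=
  Real.sqrt (Pf θ u x ^ 2 + a ^ 2 * Qf θ u x ^ 2 + ε ^ 2)

/-- The near-optimal vector field. -/
def vF (a θ ε : ℝ) (u : E2 → ℝ) (x : E2) : E2 :=
  vec2 (-((Pf θ u x * Real.cos θ - a ^ 2 * Qf θ u x * Real.sin θ) / rF a θ ε u x))
    (-((Pf θ u x * Real.sin θ + a ^ 2 * Qf θ u x * Real.cos θ) / rF a θ ε u x))

lemma rF_pos {a θ ε : ℝ} (hε : 0 < ε) (u : E2 → ℝ) (x : E2) : 0 < rF a θ ε u x := by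
  apply Real.sqrt_pos.mpr
  have h1 : (0:ℝ) ≤ Pf θ u x ^ 2 + a ^ 2 * Qf θ u x ^ 2 := by positivity
  nlinarith [pow_pos hε 2]

lemma rF_contDiff {a θ ε : ℝ} (hε : 0 < ε) {u : E2 → ℝ} (hu : ContDiff ℝ (⊤ : ℕ∞) u) :
    ContDiff ℝ 1 (rF a θ ε u) := by
  apply contDiff_iff_contDiffAt.mpr
  intro x
  have hbase : ContDiff ℝ 1 (fun x => Pf θ u x ^ 2 + a ^ 2 * Qf θ u x ^ 2 + ε ^ 2) :=
    (((Pf_contDiff hu).pow 2).add (contDiff_const.mul ((Qf_contDiff hu).pow 2))).add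
      contDiff_const
  have hpos : (0:ℝ) < Pf θ u x ^ 2 + a ^ 2 * Qf θ u x ^ 2 + ε ^ 2 := by
    have h1 : (0:ℝ) ≤ Pf θ u x ^ 2 + a ^ 2 * Qf θ u x ^ 2 := by positivity
    nlinarith [pow_pos hε 2]
  exact (Real.contDiffAt_sqrt (ne_of_gt hpos)).comp x hbase.contDiffAt

lemma vF_contDiff {a θ ε : ℝ} (hε : 0 < ε) {u : E2 → ℝ} (hu : ContDiff ℝ (⊤ : ℕ∞) u) :
    ContDiff ℝ 1 (vF a θ ε u) := by
  have hrne : ∀ x, rF a θ ε u x ≠ 0 := fun x => ne_of_gt (rF_pos hε u x)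
  have hf0 : ContDiff ℝ 1 (fun x =>
      -((Pf θ u x * Real.cos θ - a ^ 2 * Qf θ u x * Real.sin θ) / rF a θ ε u x)) :=
    ((((Pf_contDiff hu).mul contDiff_const).sub
      ((contDiff_const.mul (Qf_contDiff hu)).mul contDiff_const)).div
      (rF_contDiff hε hu) hrne).neg
  have hf1 : ContDiff ℝ 1 (fun x =>
      -((Pf θ u x * Real.sin θ + a ^ 2 * Qf θ u x * Real.cos θ) / rF a θ ε u x)) :=
    ((((Pf_contDiff hu).mul contDiff_const).add
      ((contDiff_const.mul (Qf_contDiff hu)).mul contDiff_const)).div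
      (rF_contDiff hε hu) hrne).neg
  have hv : vF a θ ε u = fun x => (PiLp.continuousLinearEquiv 2 ℝ (fun _ : Fin 2 => ℝ)).symm
      ![-((Pf θ u x * Real.cos θ - a ^ 2 * Qf θ u x * Real.sin θ) / rF a θ ε u x),
        -((Pf θ u x * Real.sin θ + a ^ 2 * Qf θ u x * Real.cos θ) / rF a θ ε u x)] := rfl
  rw [hv]
  apply (ContinuousLinearMap.contDiff
    ((PiLp.continuousLinearEquiv 2 ℝ (fun _ : Fin 2 => ℝ)).symm :
      (∀ _ : Fin 2, ℝ) →L[ℝ] E2)).comp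
  apply contDiff_pi.mpr
  intro i
  fin_cases i
  · simpa using hf0
  · simpa using hf1

lemma vF_supp {a θ ε : ℝ} {u : E2 → ℝ} :
    Function.support (vF a θ ε u) ⊆ tsupport u := by
  intro x hx
  by_contra h
  apply hx
  show vF a θ ε u x = 0
  rw [vF, Pf_zero h, Qf_zero h]
  norm_num [vec2_zero]

lemma vF_mem {a θ ε : ℝ} (ha : 0 < a) (hε : 0 < ε) {u : E2 → ℝ} (x : E2) :
    vF a θ ε u x ∈ Ellip a θ := by
  simp only [Ellip, Set.mem_setOf_eq]
  exact ellip_alg ha (Real.cos_sq_add_sin_sq θ) hε rfl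

end DTVAux

namespace DTVAux

lemma lower (Ω : Set E2) (hΩo : IsOpen Ω) (hΩb : Bornology.IsBounded Ω) {a θ : ℝ}
    (ha : 0 < a) {u : E2 → ℝ} (hu : ContDiff ℝ (⊤ : ℕ∞) u) (husupp : HasCompactSupport u)
    (hsub : tsupport u ⊆ Ω) {ε : ℝ} (hε : 0 < ε) :
    ∃ v : E2 → E2, (Cc1 Ω v ∧ ∀ x ∈ Ω, v x ∈ Ellip a θ) ∧
      (∫ x in Ω, Sf a θ u x) - ε * (volume Ω).toReal ≤ ∫ x in Ω, u x * divVec v x := by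
  have hu1 : ContDiff ℝ 1 u := hu.of_le (by simp)
  set v := vF a θ ε u with hv
  have hv1 : ContDiff ℝ 1 v := vF_contDiff hε hu
  have hvcs : HasCompactSupport v := husupp.mono' vF_supp
  have hvsub : tsupport v ⊆ Ω :=
    (closure_minimal vF_supp (isClosed_tsupport u)).trans hsub
  refine ⟨v, ⟨⟨hv1, hvcs, hvsub⟩, fun x _ => vF_mem ha hε x⟩, ?_⟩
  have hrpos : ∀ x, 0 < rF a θ ε u x := rF_pos hε u
  have key : ∫ x in Ω, u x * divVec v x
      = ∫ x in Ω, (Pf θ u x ^ 2 + a ^ 2 * Qf θ u x ^ 2) / rF a θ ε u x := by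
    rw [div_ibp Ω hu1 husupp hsub v hv1 hvcs]
    congr 1
    funext x
    exact div_alg (ne_of_gt (hrpos x)) rfl rfl
  rw [key]
  -- integrability
  have hWcont : Continuous (fun x => Pf θ u x ^ 2 + a ^ 2 * Qf θ u x ^ 2) :=
    (((Pf_contDiff hu).continuous).pow 2).add
      (continuous_const.mul (((Qf_contDiff hu).continuous).pow 2))
  have hrcont : Continuous (rF a θ ε u) := (rF_contDiff hε hu).continuous
  have hWrcont : Continuous (fun x => (Pf θ u x ^ 2 + a ^ 2 * Qf θ u x ^ 2) / rF a θ ε u x) :=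
    hWcont.div hrcont (fun x => ne_of_gt (hrpos x))
  have hWrsupp : HasCompactSupport
      (fun x => (Pf θ u x ^ 2 + a ^ 2 * Qf θ u x ^ 2) / rF a θ ε u x) := by
    apply husupp.mono'
    intro x hx
    by_contra h
    exact hx (by simp [Pf_zero h, Qf_zero h])
  have intWr : IntegrableOn
      (fun x => (Pf θ u x ^ 2 + a ^ 2 * Qf θ u x ^ 2) / rF a θ ε u x) Ω :=
    (hWrcont.integrable_of_hasCompactSupport hWrsupp).integrableOn
  have intS : IntegrableOn (Sf a θ u) Ω :=
    ((Sf_cont hu).integrable_of_hasCompactSupport (Sf_hcs husupp)).integrableOn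
  have hfin : volume Ω < ⊤ := hΩb.measure_lt_top
  have hmono : ∫ x in Ω, (Sf a θ u x
        - (Pf θ u x ^ 2 + a ^ 2 * Qf θ u x ^ 2) / rF a θ ε u x)
      ≤ ∫ _x in Ω, ε := by
    apply setIntegral_mono_on (intS.sub intWr)
      (integrableOn_const (C := ε) hfin.ne) hΩo.measurableSet
    intro x _
    have hWnn : (0:ℝ) ≤ Pf θ u x ^ 2 + a ^ 2 * Qf θ u x ^ 2 := by positivity
    exact eps_bound hWnn hε
  rw [integral_sub intS intWr] at hmono
  have hconst : ∫ _x in Ω, ε = (volume Ω).toReal * ε := by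
    rw [setIntegral_const, smul_eq_mul]; rfl
  rw [hconst] at hmono
  linarith

end DTVAux

/-- closed form of the directional total variation on `C^∞_c(Ω)`. -/
theorem dtv_closed_form_smooth (Ω : Set E2) (hΩo : IsOpen Ω) (hΩb : Bornology.IsBounded Ω)
    (a θ : ℝ) (ha : 0 < a) (ha1 : a ≤ 1) (u : E2 → ℝ)
    (hu : ContDiff ℝ (⊤ : ℕ∞) u) (husupp : HasCompactSupport u) (hsub : tsupport u ⊆ Ω) :
    DTV Ω a θ u = ENNReal.ofReal (∫ x in Ω,
      Real.sqrt ((Real.cos θ * pd 0 u x + Real.sin θ * pd 1 u x) ^ 2 +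
        a ^ 2 * (-Real.sin θ * pd 0 u x + Real.cos θ * pd 1 u x) ^ 2)) := by
  show DTV Ω a θ u = ENNReal.ofReal (∫ x in Ω, DTVAux.Sf a θ u x)
  unfold DTV
  refine le_antisymm ?_ ?_
  · apply iSup₂_le
    intro v hv
    obtain ⟨hv1, hv2⟩ := hv
    exact ENNReal.ofReal_le_ofReal (DTVAux.upper Ω hΩo ha hu husupp hsub v hv1 hv2)
  · have htend : Tendsto (fun δ : ℝ =>
        ENNReal.ofReal ((∫ x in Ω, DTVAux.Sf a θ u x) - δ * (volume Ω).toReal)) (𝓝[>] 0)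
        (𝓝 (ENNReal.ofReal (∫ x in Ω, DTVAux.Sf a θ u x))) := by
      have h1 : Tendsto (fun δ : ℝ =>
          (∫ x in Ω, DTVAux.Sf a θ u x) - δ * (volume Ω).toReal) (𝓝 0)
          (𝓝 (∫ x in Ω, DTVAux.Sf a θ u x)) := by
        have h2 : Tendsto (fun δ : ℝ => δ * (volume Ω).toReal) (𝓝 0) (𝓝 0) := by
          simpa using (continuous_mul_right
            (volume Ω).toReal).tendsto 0
        simpa using tendsto_const_nhds.sub h2
      exact (ENNReal.continuous_ofReal.tendsto _).comp (h1.mono_left nhdsWithin_le_nhds)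
    refine le_of_tendsto htend ?_
    filter_upwards [self_mem_nhdsWithin] with δ hδ
    simp only [Set.mem_Ioi] at hδ
    obtain ⟨v, hvmem, hest⟩ := DTVAux.lower Ω hΩo hΩb (θ := θ) ha hu husupp hsub hδ
    refine le_trans (ENNReal.ofReal_le_ofReal hest) ?_
    exact le_iSup₂ (f := fun (v : E2 → E2)
      (_ : v ∈ {v : E2 → E2 | Cc1 Ω v ∧ ∀ x ∈ Ω, v x ∈ Ellip a θ}) =>
      ENNReal.ofReal (∫ x in Ω, u x * divVec v x)) v hvmem
end
end

section
/- Let u₁ = χ_{B̄(0,1)} be the characteristic function of the closed unit disk, and assume B̄(0,1) ⊂ Ω. Then for every θ ∈ ℝ and a ∈ (0,1], DTV^{a,θ}(u₁) = ∫₀^{2π} ( cos²ω + a² sin²ω )^{1/2} dω; in particular the value is independent of θ. -/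
open MeasureTheory Filter
open scoped ENNReal Topology Pointwise

noncomputable section

/-!
By the divergence theorem, `∫_Ω χ_B div v = ∫_{-π}^{π} ⟪v (e ω), e ω⟫ dω` with
`e ω = (cos ω, sin ω)`; here it is obtained from Green's theorem on the rectangle
`[0, 1] × [-π, π]` of polar coordinates.
If `v` takes values in the ellipse `E = E^{a,θ}`, then `⟪v (e ω), e ω⟫` is at most the support
function `h_E (e ω) = √(cos² (ω - θ) + a² sin² (ω - θ))`, which after the shift `ω ↦ ω + θ` gives
the upper bound. It is attained by `χ • p`, where `p x` is the point of `∂E` with outer normal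
along `x` and `χ` is a smooth cutoff equal to `1` on the unit circle, vanishing near `0`
(where `p` is singular) and supported in `Ω`.
-/

open Real Set Metric
open scoped RealInnerProductSpace Manifold

@[simp] lemma vec2_apply_zero (x y : ℝ) : vec2 x y 0 = x := rfl

@[simp] lemma vec2_apply_one (x y : ℝ) : vec2 x y 1 = y := rfl

lemma vec2_eq_smul_add_smul (x y : ℝ) : vec2 x y = x • vec2 1 0 + y • vec2 0 1 := by
  ext i; fin_cases i <;> simp

lemma inner_eq_mul_add_mul (x y : E2) : ⟪x, y⟫ = x 0 * y 0 + x 1 * y 1 := by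
  simp [PiLp.inner_apply, Fin.sum_univ_two, mul_comm]

lemma inner_vec2 (x : E2) (c s : ℝ) : ⟪x, vec2 c s⟫ = x 0 * c + x 1 * s :=
  inner_eq_mul_add_mul _ _

lemma hasDerivAt_vec2 {f g : ℝ → ℝ} {f' g' t : ℝ} (hf : HasDerivAt f f' t)
    (hg : HasDerivAt g g' t) : HasDerivAt (fun t => vec2 (f t) (g t)) (vec2 f' g') t := by
  simp only [vec2_eq_smul_add_smul (f _), vec2_eq_smul_add_smul f']
  exact (hf.smul_const _).add (hg.smul_const _)

def unitVec (ω : ℝ) : E2 := vec2 (cos ω) (sin ω)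

def unitVecPerp (ω : ℝ) : E2 := vec2 (-sin ω) (cos ω)

@[simp] lemma norm_unitVec (ω : ℝ) : ‖unitVec ω‖ = 1 := by
  simp [EuclideanSpace.norm_eq, Fin.sum_univ_two, unitVec]

@[simp] lemma norm_unitVecPerp (ω : ℝ) : ‖unitVecPerp ω‖ = 1 := by
  simp [EuclideanSpace.norm_eq, Fin.sum_univ_two, unitVecPerp]

lemma inner_unitVec_unitVec (α β : ℝ) : ⟪unitVec α, unitVec β⟫ = cos (α - β) := by
  simp [unitVec, inner_vec2, cos_sub]

lemma inner_unitVec_unitVecPerp (α β : ℝ) : ⟪unitVec α, unitVecPerp β⟫ = sin (α - β) := by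
  rw [unitVec, unitVecPerp, inner_vec2, sin_sub]
  simp only [vec2_apply_zero, vec2_apply_one]
  ring

lemma inner_unitVecPerp_unitVec (α β : ℝ) : ⟪unitVecPerp α, unitVec β⟫ = sin (β - α) := by
  rw [real_inner_comm, inner_unitVec_unitVecPerp]

lemma inner_eq_inner_unitVec_add_inner_unitVecPerp (x y : E2) (θ : ℝ) :
    ⟪x, y⟫ = ⟪x, unitVec θ⟫ * ⟪y, unitVec θ⟫ + ⟪x, unitVecPerp θ⟫ * ⟪y, unitVecPerp θ⟫ := by
  simp only [inner_eq_mul_add_mul, unitVec, unitVecPerp, vec2_apply_zero, vec2_apply_one]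
  linear_combination -(x 0 * y 0 + x 1 * y 1) * sin_sq_add_cos_sq θ

lemma hasDerivAt_unitVec (ω : ℝ) : HasDerivAt unitVec (unitVecPerp ω) ω :=
  hasDerivAt_vec2 (hasDerivAt_cos ω) (hasDerivAt_sin ω)

lemma hasDerivAt_unitVecPerp (ω : ℝ) : HasDerivAt unitVecPerp (-unitVec ω) ω := by
  have h : vec2 (-cos ω) (-sin ω) = -unitVec ω := by
    ext i; fin_cases i <;> simp [unitVec]
  exact h ▸ hasDerivAt_vec2 (hasDerivAt_sin ω).neg (hasDerivAt_cos ω)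

lemma contDiff_unitVec {n : WithTop ℕ∞} : ContDiff ℝ n unitVec := by
  unfold unitVec
  simp only [vec2_eq_smul_add_smul (cos _)]
  fun_prop

lemma contDiff_unitVecPerp {n : WithTop ℕ∞} : ContDiff ℝ n unitVecPerp := by
  unfold unitVecPerp
  simp only [vec2_eq_smul_add_smul (-sin _)]
  fun_prop

lemma continuous_unitVec : Continuous unitVec :=
  contDiff_unitVec (n := 0).continuous

lemma pd_apply_eq_fderiv {v : E2 → E2} {x : E2} (hv : DifferentiableAt ℝ v x) (i j : Fin 2) :
    pd i (fun y => v y j) x = fderiv ℝ v x (EuclideanSpace.single i 1) j := by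
  change fderiv ℝ (EuclideanSpace.proj j ∘ v) x _ = _
  rw [((EuclideanSpace.proj j).hasFDerivAt.comp x hv.hasFDerivAt).fderiv]
  rfl

lemma divVec_eq_fderiv {v : E2 → E2} {x : E2} (hv : DifferentiableAt ℝ v x) :
    divVec v x = fderiv ℝ v x (vec2 1 0) 0 + fderiv ℝ v x (vec2 0 1) 1 := by
  have h0 : EuclideanSpace.single (0 : Fin 2) (1 : ℝ) = vec2 1 0 := by
    ext i; fin_cases i <;> simp
  have h1 : EuclideanSpace.single (1 : Fin 2) (1 : ℝ) = vec2 0 1 := by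
    ext i; fin_cases i <;> simp
  rw [divVec, pd_apply_eq_fderiv hv, pd_apply_eq_fderiv hv, h0, h1]

lemma continuous_divVec {v : E2 → E2} (hv : ContDiff ℝ 1 v) : Continuous (divVec v) := by
  have hD := hv.continuous_fderiv one_ne_zero
  simp only [funext fun x => divVec_eq_fderiv (hv.differentiable one_ne_zero x)]
  exact ((EuclideanSpace.proj 0).continuous.comp (hD.clm_apply continuous_const)).add
    ((EuclideanSpace.proj 1).continuous.comp (hD.clm_apply continuous_const))

/-- The trace does not depend on the orthonormal frame. -/
lemma inner_unitVec_add_inner_unitVecPerp (L : E2 →L[ℝ] E2) (ω : ℝ) :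
    ⟪L (unitVec ω), unitVec ω⟫ + ⟪L (unitVecPerp ω), unitVecPerp ω⟫ =
      L (vec2 1 0) 0 + L (vec2 0 1) 1 := by
  simp only [unitVec, unitVecPerp, inner_vec2]
  rw [vec2_eq_smul_add_smul (cos ω), vec2_eq_smul_add_smul (-sin ω)]
  simp only [map_add, map_smul, PiLp.add_apply, PiLp.smul_apply, smul_eq_mul]
  linear_combination (L (vec2 1 0) 0 + L (vec2 0 1) 1) * sin_sq_add_cos_sq ω

lemma hasDerivAt_fst_of_differentiableAt {F : ℝ × ℝ → ℝ} {p : ℝ × ℝ}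
    (hF : DifferentiableAt ℝ F p) :
    HasDerivAt (fun r => F (r, p.2)) (fderiv ℝ F p (1, 0)) p.1 :=
  hF.hasFDerivAt.comp_hasDerivAt_of_eq p.1 ((hasDerivAt_id _).prodMk (hasDerivAt_const _ _)) rfl

lemma hasDerivAt_snd_of_differentiableAt {F : ℝ × ℝ → ℝ} {p : ℝ × ℝ}
    (hF : DifferentiableAt ℝ F p) :
    HasDerivAt (fun ω => F (p.1, ω)) (fderiv ℝ F p (0, 1)) p.2 :=
  hF.hasFDerivAt.comp_hasDerivAt_of_eq p.2 ((hasDerivAt_const _ _).prodMk (hasDerivAt_id _)) rfl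

def radialFlux (v : E2 → E2) (p : ℝ × ℝ) : ℝ := p.1 * ⟪v (p.1 • unitVec p.2), unitVec p.2⟫

def angularFlux (v : E2 → E2) (p : ℝ × ℝ) : ℝ := ⟪v (p.1 • unitVec p.2), unitVecPerp p.2⟫

lemma contDiff_radialFlux {v : E2 → E2} (hv : ContDiff ℝ 1 v) : ContDiff ℝ 1 (radialFlux v) :=
  contDiff_fst.mul <| (hv.comp (contDiff_fst.smul (contDiff_unitVec.comp contDiff_snd))).inner ℝ
    (contDiff_unitVec.comp contDiff_snd)

lemma contDiff_angularFlux {v : E2 → E2} (hv : ContDiff ℝ 1 v) :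
    ContDiff ℝ 1 (angularFlux v) :=
  (hv.comp (contDiff_fst.smul (contDiff_unitVec.comp contDiff_snd))).inner ℝ
    (contDiff_unitVecPerp.comp contDiff_snd)

lemma hasDerivAt_radialFlux {v : E2 → E2} (hv : Differentiable ℝ v) (r ω : ℝ) :
    HasDerivAt (fun r => radialFlux v (r, ω)) (⟪v (r • unitVec ω), unitVec ω⟫ +
      r * ⟪fderiv ℝ v (r • unitVec ω) (unitVec ω), unitVec ω⟫) r := by
  have hv' := (hv _).hasFDerivAt.comp_hasDerivAt r ((hasDerivAt_id r).smul_const (unitVec ω))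
  refine ((hasDerivAt_id r).mul (hv'.inner ℝ (hasDerivAt_const r (unitVec ω)))).congr_deriv ?_
  simp

lemma hasDerivAt_angularFlux {v : E2 → E2} (hv : Differentiable ℝ v) (r ω : ℝ) :
    HasDerivAt (fun ω => angularFlux v (r, ω)) (r * ⟪fderiv ℝ v (r • unitVec ω)
      (unitVecPerp ω), unitVecPerp ω⟫ - ⟪v (r • unitVec ω), unitVec ω⟫) ω := by
  have hv' := (hv _).hasFDerivAt.comp_hasDerivAt ω ((hasDerivAt_unitVec ω).const_smul r)
  refine (hv'.inner ℝ (hasDerivAt_unitVecPerp ω)).congr_deriv ?_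
  simp only [Function.comp_apply, Pi.smul_apply, map_smul, inner_smul_left, inner_neg_right,
    conj_trivial]
  ring

lemma fderiv_radialFlux_add_fderiv_angularFlux {v : E2 → E2} (hv : ContDiff ℝ 1 v)
    (p : ℝ × ℝ) : fderiv ℝ (radialFlux v) p (1, 0) + fderiv ℝ (angularFlux v) p (0, 1) =
      p.1 * divVec v (p.1 • unitVec p.2) := by
  have hv1 := hv.differentiable one_ne_zero
  rw [(hasDerivAt_fst_of_differentiableAt ((contDiff_radialFlux hv).differentiable
      one_ne_zero p)).unique (hasDerivAt_radialFlux hv1 _ _),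
    (hasDerivAt_snd_of_differentiableAt ((contDiff_angularFlux hv).differentiable
      one_ne_zero p)).unique (hasDerivAt_angularFlux hv1 _ _),
    divVec_eq_fderiv (hv1 _), ← inner_unitVec_add_inner_unitVecPerp _ p.2]
  ring

def measurableEquivProd : E2 ≃ᵐ ℝ × ℝ :=
  (MeasurableEquiv.toLp 2 (Fin 2 → ℝ)).symm.trans MeasurableEquiv.finTwoArrow

lemma measurePreserving_measurableEquivProd : MeasurePreserving measurableEquivProd :=
  (volume_preserving_finTwoArrow ℝ).comp
    (EuclideanSpace.volume_preserving_symm_measurableEquiv_toLp (Fin 2))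

lemma measurableEquivProd_symm_polarCoord_symm (p : ℝ × ℝ) :
    measurableEquivProd.symm (polarCoord.symm p) = p.1 • unitVec p.2 := by
  ext i; fin_cases i <;> simp [measurableEquivProd, unitVec, polarCoord_symm_apply]

lemma integral_closedBall_eq_polar {f : E2 → ℝ} (hf : Continuous f) {R : ℝ} (hR : 0 ≤ R) :
    ∫ x in closedBall 0 R, f x = ∫ r in 0..R, ∫ ω in -π..π, r * f (r • unitVec ω) := by
  set S : Set (ℝ × ℝ) := {p | p.1 ≤ R}
  have hrect : polarCoord.target ∩ S = Ioc 0 R ×ˢ Ioo (-π) π := by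
    ext ⟨r, ω⟩
    simp only [polarCoord_target, mem_inter_iff, mem_prod, mem_Ioi, mem_Ioo, mem_ofPred_eq,
      mem_Ioc, S]
    tauto
  have hind : ∀ p ∈ polarCoord.target,
      p.1 • (closedBall 0 R).indicator f (measurableEquivProd.symm (polarCoord.symm p)) =
        S.indicator (fun p => p.1 * f (p.1 • unitVec p.2)) p := by
    rintro ⟨r, ω⟩ ⟨hr, -⟩
    simp only [mem_Ioi] at hr
    rw [measurableEquivProd_symm_polarCoord_symm]
    by_cases h : r ≤ R <;> simp [S, norm_smul, abs_of_pos hr, h]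
  have hint : IntegrableOn (fun p : ℝ × ℝ => p.1 * f (p.1 • unitVec p.2))
      (Ioc 0 R ×ˢ Ioo (-π) π) :=
    ((Continuous.continuousOn (by have := continuous_unitVec; fun_prop)).integrableOn_compact
      (isCompact_Icc.prod isCompact_Icc)).mono_set
      (prod_mono Ioc_subset_Icc_self Ioo_subset_Icc_self)
  rw [← integral_indicator measurableSet_closedBall,
    ← measurePreserving_measurableEquivProd.symm.integral_comp', ← integral_comp_polarCoord_symm,
    setIntegral_congr_fun polarCoord.open_target.measurableSet hind,
    setIntegral_indicator (measurableSet_le measurable_fst measurable_const), hrect,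
    Measure.volume_eq_prod, setIntegral_prod _ hint, intervalIntegral.integral_of_le hR]
  refine setIntegral_congr_fun measurableSet_Ioc fun r _ => ?_
  rw [intervalIntegral.integral_of_le (by linarith [pi_pos]), integral_Ioc_eq_integral_Ioo]

lemma integral_divVec_closedBall {v : E2 → E2} (hv : ContDiff ℝ 1 v) {R : ℝ} (hR : 0 ≤ R) :
    ∫ x in closedBall 0 R, divVec v x = ∫ ω in -π..π, R * ⟪v (R • unitVec ω), unitVec ω⟫ := by
  have hF := contDiff_radialFlux hv
  have hG := contDiff_angularFlux hv
  have hdiv : Continuous fun p : ℝ × ℝ =>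
      fderiv ℝ (radialFlux v) p (1, 0) + fderiv ℝ (angularFlux v) p (0, 1) :=
    ((hF.continuous_fderiv one_ne_zero).clm_apply continuous_const).add
      ((hG.continuous_fderiv one_ne_zero).clm_apply continuous_const)
  have hpolar (r ω : ℝ) := (fderiv_radialFlux_add_fderiv_angularFlux hv (r, ω)).symm
  simp_rw [integral_closedBall_eq_polar (continuous_divVec hv) hR, hpolar]
  rw [integral2_divergence_prod_of_hasFDerivAt _ _ _ _ 0 (-π) R π hF.continuous.continuousOn
    hG.continuous.continuousOn (fun p _ => (hF.differentiable one_ne_zero p).hasFDerivAt)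
    (fun p _ => (hG.differentiable one_ne_zero p).hasFDerivAt)
    (hdiv.continuousOn.integrableOn_compact (isCompact_uIcc.prod isCompact_uIcc))]
  simp [radialFlux, angularFlux, unitVec, unitVecPerp]

lemma mem_Ellip_iff {a θ : ℝ} {x : E2} :
    x ∈ Ellip a θ ↔ ⟪x, unitVec θ⟫ ^ 2 + (⟪x, unitVecPerp θ⟫ / a) ^ 2 ≤ 1 := by
  simp only [Ellip, mem_ofPred_eq, unitVec, unitVecPerp, inner_vec2, neg_mul, mul_neg]

lemma smul_mem_Ellip {a θ t : ℝ} {x : E2} (ht : |t| ≤ 1) (hx : x ∈ Ellip a θ) :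
    t • x ∈ Ellip a θ := by
  rw [mem_Ellip_iff] at hx ⊢
  have ht2 : t ^ 2 ≤ 1 := by nlinarith [sq_abs t, abs_nonneg t]
  simp only [inner_smul_left, conj_trivial, mul_div_assoc, mul_pow]
  nlinarith [sq_nonneg t]

def ellipSupport (a θ : ℝ) (x : E2) : ℝ :=
  √(⟪x, unitVec θ⟫ ^ 2 + a ^ 2 * ⟪x, unitVecPerp θ⟫ ^ 2)

lemma sq_ellipSupport (a θ : ℝ) (x : E2) :
    ellipSupport a θ x ^ 2 = ⟪x, unitVec θ⟫ ^ 2 + a ^ 2 * ⟪x, unitVecPerp θ⟫ ^ 2 :=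
  sq_sqrt (by positivity)

lemma continuous_ellipSupport (a θ : ℝ) : Continuous (ellipSupport a θ) :=
  (((continuous_id.inner continuous_const).pow 2).add
    (continuous_const.mul ((continuous_id.inner continuous_const).pow 2))).sqrt

lemma ellipSupport_unitVec (a θ ω : ℝ) :
    ellipSupport a θ (unitVec ω) = √(cos (ω - θ) ^ 2 + a ^ 2 * sin (ω - θ) ^ 2) := by
  rw [ellipSupport, inner_unitVec_unitVec, inner_unitVec_unitVecPerp]

lemma ellipSupport_pos {a θ : ℝ} (ha : a ≠ 0) {x : E2} (hx : x ≠ 0) :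
    0 < ellipSupport a θ x := by
  refine sqrt_pos.2 (lt_of_le_of_ne (by positivity) fun h => hx ?_)
  obtain ⟨hX, hY⟩ := (add_eq_zero_iff_of_nonneg (sq_nonneg _) (by positivity)).1 h.symm
  rw [← inner_self_eq_zero (𝕜 := ℝ), inner_eq_inner_unitVec_add_inner_unitVecPerp x x θ,
    pow_eq_zero_iff two_ne_zero |>.1 hX,
    pow_eq_zero_iff two_ne_zero |>.1 ((mul_eq_zero.1 hY).resolve_left (pow_ne_zero 2 ha))]
  ring

lemma inner_le_ellipSupport {a θ : ℝ} (ha : a ≠ 0) {y : E2} (hy : y ∈ Ellip a θ) (x : E2) :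
    ⟪y, x⟫ ≤ ellipSupport a θ x := by
  rw [mem_Ellip_iff] at hy
  rw [inner_eq_inner_unitVec_add_inner_unitVecPerp y x θ, ellipSupport]
  set p := ⟪y, unitVec θ⟫
  set q := ⟪y, unitVecPerp θ⟫ / a
  set X := ⟪x, unitVec θ⟫
  set Y := a * ⟪x, unitVecPerp θ⟫
  have hqY : ⟪y, unitVecPerp θ⟫ * ⟪x, unitVecPerp θ⟫ = q * Y := by
    simp only [q, Y]; field_simp
  rw [hqY, ← mul_pow]
  refine (le_abs_self _).trans (abs_le_sqrt ?_)
  -- Cauchy–Schwarz for `(p, q)` and `(X, Y)`, with `p² + q² ≤ 1`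
  nlinarith [sq_nonneg (p * Y - q * X), sq_nonneg X, sq_nonneg Y]

/-- The point of `∂(Ellip a θ)` where the outer normal points along `x` (and `0` for `x = 0`). -/
def ellipSupportPoint (a θ : ℝ) (x : E2) : E2 :=
  (ellipSupport a θ x)⁻¹ •
    (⟪x, unitVec θ⟫ • unitVec θ + (a ^ 2 * ⟪x, unitVecPerp θ⟫) • unitVecPerp θ)

lemma inner_ellipSupportPoint_unitVec (a θ : ℝ) (x : E2) :
    ⟪ellipSupportPoint a θ x, unitVec θ⟫ = (ellipSupport a θ x)⁻¹ * ⟪x, unitVec θ⟫ := by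
  simp [ellipSupportPoint, inner_add_left, inner_smul_left, inner_unitVecPerp_unitVec]

lemma inner_ellipSupportPoint_unitVecPerp (a θ : ℝ) (x : E2) :
    ⟪ellipSupportPoint a θ x, unitVecPerp θ⟫ =
      (ellipSupport a θ x)⁻¹ * (a ^ 2 * ⟪x, unitVecPerp θ⟫) := by
  simp [ellipSupportPoint, inner_add_left, inner_smul_left, inner_unitVec_unitVecPerp]

lemma ellipSupportPoint_mem (a θ : ℝ) (x : E2) : ellipSupportPoint a θ x ∈ Ellip a θ := by
  rw [mem_Ellip_iff, inner_ellipSupportPoint_unitVec, inner_ellipSupportPoint_unitVecPerp]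
  calc _ = (⟪x, unitVec θ⟫ ^ 2 + a ^ 2 * ⟪x, unitVecPerp θ⟫ ^ 2) / ellipSupport a θ x ^ 2 := by
        field_simp
    _ ≤ 1 := by rw [← sq_ellipSupport]; exact div_self_le_one _

lemma inner_ellipSupportPoint_self (a θ : ℝ) (x : E2) :
    ⟪ellipSupportPoint a θ x, x⟫ = ellipSupport a θ x := by
  rw [inner_eq_inner_unitVec_add_inner_unitVecPerp _ _ θ, inner_ellipSupportPoint_unitVec,
    inner_ellipSupportPoint_unitVecPerp]
  calc _ = (ellipSupport a θ x)⁻¹ * ellipSupport a θ x ^ 2 := by rw [sq_ellipSupport]; ring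
    _ = ellipSupport a θ x := by rw [sq, ← mul_assoc, inv_mul_mul_self]

lemma contDiffAt_ellipSupportPoint {a θ : ℝ} (ha : a ≠ 0) {x : E2} (hx : x ≠ 0) {n : ℕ∞} :
    ContDiffAt ℝ n (ellipSupportPoint a θ) x := by
  have hX : ContDiff ℝ n fun y : E2 => ⟪y, unitVec θ⟫ := contDiff_id.inner ℝ contDiff_const
  have hY : ContDiff ℝ n fun y : E2 => ⟪y, unitVecPerp θ⟫ := contDiff_id.inner ℝ contDiff_const
  have hN : ContDiffAt ℝ n (ellipSupport a θ) x :=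
    ((hX.pow 2).add (contDiff_const.mul (hY.pow 2))).contDiffAt.sqrt
      (by rw [← sq_ellipSupport]; exact pow_ne_zero 2 (ellipSupport_pos ha hx).ne')
  exact (hN.inv (ellipSupport_pos ha hx).ne').smul
    ((hX.smul contDiff_const).add ((contDiff_const.mul hY).smul contDiff_const)).contDiffAt

lemma exists_contDiff_zero_one_nhdsSet_of_isCompact {E : Type*} [NormedAddCommGroup E]
    [NormedSpace ℝ E] [FiniteDimensional ℝ E] {n : ℕ∞} {s K U : Set E} (hs : IsClosed s)
    (hK : IsCompact K) (hU : IsOpen U) (hKU : K ⊆ U) (hsK : Disjoint s K) :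
    ∃ χ : E → ℝ, ContDiff ℝ n χ ∧ (∀ x, χ x ∈ Icc 0 1) ∧ EqOn χ 1 K ∧
      (∀ᶠ x in 𝓝ˢ s, χ x = 0) ∧ HasCompactSupport χ ∧ tsupport χ ⊆ U := by
  obtain ⟨L, hL, hKL, hLU⟩ := exists_compact_between hK hU hKU
  obtain ⟨χ, hχs, hχK, hχ01⟩ := exists_contMDiffMap_zero_one_nhds_of_isClosed 𝓘(ℝ, E) (n := n)
    (hs.union isOpen_interior.isClosed_compl) hK.isClosed
    (disjoint_union_left.2 ⟨hsK, disjoint_compl_left.mono_right hKL⟩)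
  have hsupp : tsupport χ ⊆ interior L := fun x hx => by
    by_contra hxL
    exact notMem_tsupport_iff_eventuallyEq.2
      (hχs.filter_mono (nhds_le_nhdsSet (show x ∈ s ∪ (interior L)ᶜ from Or.inr hxL))) hx
  exact ⟨χ, contMDiff_iff_contDiff.1 χ.contMDiff, hχ01, fun x hx => hχK.self_of_nhdsSet x hx,
    hχs.filter_mono (nhdsSet_mono subset_union_left),
    hL.of_isClosed_subset (isClosed_tsupport _) (hsupp.trans interior_subset),
    hsupp.trans (interior_subset.trans hLU)⟩

lemma exists_admissible_eq_ellipSupportPoint {Ω : Set E2} (hΩ : IsOpen Ω)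
    (hsub : closedBall (0 : E2) 1 ⊆ Ω) {a : ℝ} (θ : ℝ) (ha : a ≠ 0) :
    ∃ v : E2 → E2, Cc1 Ω v ∧ (∀ x, v x ∈ Ellip a θ) ∧
      ∀ ω, v (unitVec ω) = ellipSupportPoint a θ (unitVec ω) := by
  obtain ⟨χ, hχ, hχ01, hχ1, hχ0, hχc, hχΩ⟩ :=
    exists_contDiff_zero_one_nhdsSet_of_isCompact (n := 1) isClosed_singleton
      (isCompact_sphere 0 1) hΩ (sphere_subset_closedBall.trans hsub)
      (disjoint_singleton_left.2 (by simp : (0 : E2) ∉ sphere 0 1))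
  refine ⟨fun x => χ x • ellipSupportPoint a θ x, ⟨?_, hχc.smul_right,
    (tsupport_smul_subset_left _ _).trans hχΩ⟩, fun x => ?_, fun ω => ?_⟩
  · refine contDiff_iff_contDiffAt.2 fun x => ?_
    rcases eq_or_ne x 0 with rfl | hx
    · rw [nhdsSet_singleton] at hχ0
      exact (contDiffAt_const (c := (0 : E2))).congr_of_eventuallyEq
        (hχ0.mono fun y hy => by simp [hy])
    · exact hχ.contDiffAt.smul (contDiffAt_ellipSupportPoint ha hx)
  · exact smul_mem_Ellip (abs_le.2 ⟨by linarith [(hχ01 x).1], (hχ01 x).2⟩)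
      (ellipSupportPoint_mem a θ x)
  · simp [hχ1 (show unitVec ω ∈ sphere (0 : E2) 1 by simp)]

lemma integral_ellipSupport_unitVec (a θ : ℝ) :
    ∫ ω in -π..π, ellipSupport a θ (unitVec ω) =
      ∫ ω in 0..2 * π, √(cos ω ^ 2 + a ^ 2 * sin ω ^ 2) := by
  have hper : Function.Periodic (fun ω => √(cos ω ^ 2 + a ^ 2 * sin ω ^ 2)) (2 * π) :=
    fun ω => by simp
  simp_rw [ellipSupport_unitVec]
  rw [intervalIntegral.integral_comp_sub_right (fun ω => √(cos ω ^ 2 + a ^ 2 * sin ω ^ 2)) θ,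
    show π - θ = -π - θ + 2 * π by ring, hper.intervalIntegral_add_eq _ 0, zero_add]

lemma setIntegral_indicator_one_mul {α : Type*} [MeasurableSpace α] {μ : Measure α}
    {s t : Set α} (hs : MeasurableSet s) (hst : s ⊆ t) (f : α → ℝ) :
    ∫ x in t, s.indicator (fun _ => (1 : ℝ)) x * f x ∂μ = ∫ x in s, f x ∂μ := by
  simp_rw [← indicator_mul_left, one_mul]
  rw [setIntegral_indicator hs, inter_eq_right.2 hst]

theorem dtv_unit_disk_general (Ω : Set E2) (hΩo : IsOpen Ω)
    (a θ : ℝ) (ha : 0 < a)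
    (hsub : Metric.closedBall (0 : E2) 1 ⊆ Ω) :
    DTV Ω a θ ((Metric.closedBall (0 : E2) 1).indicator fun _ => (1 : ℝ)) =
      ENNReal.ofReal (∫ ω in (0:ℝ)..(2 * Real.pi),
        Real.sqrt (Real.cos ω ^ 2 + a ^ 2 * Real.sin ω ^ 2)) := by
  have hflux (v : E2 → E2) (hv : ContDiff ℝ 1 v) :
      ∫ x in Ω, (closedBall (0 : E2) 1).indicator (fun _ => (1 : ℝ)) x * divVec v x =
        ∫ ω in -π..π, ⟪v (unitVec ω), unitVec ω⟫ := by
    rw [setIntegral_indicator_one_mul measurableSet_closedBall hsub,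
      integral_divVec_closedBall hv zero_le_one]
    simp only [one_smul, one_mul]
  rw [← integral_ellipSupport_unitVec, DTV]
  refine le_antisymm (iSup₂_le fun v ⟨⟨hv, _⟩, hvE⟩ => ?_) ?_
  · rw [hflux v hv]
    refine ENNReal.ofReal_le_ofReal (intervalIntegral.integral_mono_on (by linarith [pi_pos])
      ?_ ?_ fun ω _ => inner_le_ellipSupport ha.ne' (hvE _ (hsub (by simp))) _)
    · exact ((hv.continuous.comp continuous_unitVec).inner
        continuous_unitVec).intervalIntegrable _ _
    · exact ((continuous_ellipSupport a θ).comp continuous_unitVec).intervalIntegrable _ _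
  · obtain ⟨v, hv, hvE, hv_unitVec⟩ :=
      exists_admissible_eq_ellipSupportPoint hΩo hsub θ ha.ne'
    refine le_iSup₂_of_le v ⟨hv, fun x _ => hvE x⟩ (le_of_eq ?_)
    rw [hflux v hv.1]
    exact congrArg _ (intervalIntegral.integral_congr fun ω _ => by
      rw [hv_unitVec, inner_ellipSupportPoint_self])

/-- `DTV^{a,θ}` of the characteristic function of the closed unit disk. -/
theorem dtv_unit_disk (Ω : Set E2) (hΩo : IsOpen Ω) (hΩb : Bornology.IsBounded Ω)
    (a θ : ℝ) (ha : 0 < a) (ha1 : a ≤ 1)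
    (hsub : Metric.closedBall (0 : E2) 1 ⊆ Ω) :
    DTV Ω a θ ((Metric.closedBall (0 : E2) 1).indicator fun _ => (1 : ℝ)) =
      ENNReal.ofReal (∫ ω in (0:ℝ)..(2 * Real.pi),
        Real.sqrt (Real.cos ω ^ 2 + a ^ 2 * Real.sin ω ^ 2)) :=
  dtv_unit_disk_general Ω hΩo a θ ha hsub
end
end

section
/- Invariance of DTGV² under addition of affine functions: for every u ∈ L¹(Ω) and every affine function w(x) = c₀ + c₁x₁ + c₂x₂ on Ω, DTGV²_λ(u + w) = DTGV²_λ(u). -/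
open MeasureTheory Filter
open scoped ENNReal Topology Pointwise

noncomputable section

/-! Since `div²` is formally self-adjoint on compactly supported fields, integrating by parts
twice moves both derivatives of `div² W` onto the affine function, whose second derivatives
vanish; hence `∫_Ω w · div² W = 0` for every admissible `W`, and the two suprema defining
`DTGV²_λ(u + w)` and `DTGV²_λ(u)` agree term by term. -/

section PartialDerivative

variable {f g : E2 → ℝ}

theorem contDiff_pd {m n : WithTop ℕ∞} (hg : ContDiff ℝ n g) (hmn : m + 1 ≤ n) (i : Fin 2) :
    ContDiff ℝ m (pd i g) :=
  (hg.fderiv_right hmn).clm_apply contDiff_const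

theorem continuous_pd (hg : ContDiff ℝ 1 g) (i : Fin 2) : Continuous (pd i g) :=
  (contDiff_pd (m := 0) hg le_rfl i).continuous

theorem continuous_pd_pd (hg : ContDiff ℝ 2 g) (i j : Fin 2) : Continuous (pd i (pd j g)) :=
  continuous_pd (contDiff_pd (m := 1) hg one_add_one_eq_two.le j) i

theorem support_pd_subset (i : Fin 2) : Function.support (pd i g) ⊆ tsupport g := by
  intro x hx
  refine support_fderiv_subset ℝ fun h => hx ?_
  simp [pd, h]

theorem hasCompactSupport_pd (hg : HasCompactSupport g) (i : Fin 2) :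
    HasCompactSupport (pd i g) :=
  hg.mono' (support_pd_subset i)

theorem support_pd_pd_subset (i j : Fin 2) : Function.support (pd i (pd j g)) ⊆ tsupport g :=
  (support_pd_subset i).trans (closure_minimal (support_pd_subset j) (isClosed_tsupport g))

theorem integral_mul_pd_eq_neg (hf : ContDiff ℝ 1 f) (hg : ContDiff ℝ 1 g)
    (hgs : HasCompactSupport g) (i : Fin 2) :
    ∫ x, f x * pd i g x = -∫ x, pd i f x * g x :=
  integral_mul_fderiv_eq_neg_fderiv_mul_of_integrable
    (((continuous_pd hf i).mul hg.continuous).integrable_of_hasCompactSupport hgs.mul_left)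
    ((hf.continuous.mul (continuous_pd hg i)).integrable_of_hasCompactSupport
      (hasCompactSupport_pd hgs i).mul_left)
    ((hf.continuous.mul hg.continuous).integrable_of_hasCompactSupport hgs.mul_left)
    (fun x _ => hf.differentiable one_ne_zero x) (fun x _ => hg.differentiable one_ne_zero x)

theorem integral_mul_pd_pd (hf : ContDiff ℝ 2 f) (hg : ContDiff ℝ 2 g)
    (hgs : HasCompactSupport g) (i j : Fin 2) :
    ∫ x, f x * pd i (pd j g) x = ∫ x, pd j (pd i f) x * g x := by
  have hf' := contDiff_pd (m := 1) hf one_add_one_eq_two.le i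
  have hg' := contDiff_pd (m := 1) hg one_add_one_eq_two.le j
  rw [integral_mul_pd_eq_neg (hf.of_le one_le_two) hg' (hasCompactSupport_pd hgs j) i,
    integral_mul_pd_eq_neg hf' (hg.of_le one_le_two) hgs j, neg_neg]

end PartialDerivative

section Affine

def affine2 (c₀ c₁ c₂ : ℝ) (x : E2) : ℝ := c₀ + c₁ * x 0 + c₂ * x 1

variable (c₀ c₁ c₂ : ℝ)

theorem contDiff_affine2 {n : WithTop ℕ∞} : ContDiff ℝ n (affine2 c₀ c₁ c₂) := by
  unfold affine2
  fun_prop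

theorem continuous_affine2 : Continuous (affine2 c₀ c₁ c₂) :=
  (contDiff_affine2 (n := 0) c₀ c₁ c₂).continuous

theorem pd_affine2 (i : Fin 2) (x : E2) : pd i (affine2 c₀ c₁ c₂) x = ![c₁, c₂] i := by
  have hL : HasFDerivAt (affine2 c₀ c₁ c₂) _ x := ((hasFDerivAt_const c₀ x).add
    ((EuclideanSpace.proj (0 : Fin 2) : E2 →L[ℝ] ℝ).hasFDerivAt.const_mul c₁)).add
    ((EuclideanSpace.proj (1 : Fin 2) : E2 →L[ℝ] ℝ).hasFDerivAt.const_mul c₂)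
  rw [pd, hL.fderiv]
  fin_cases i <;> simp

theorem pd_pd_affine2 (i j : Fin 2) : pd j (pd i (affine2 c₀ c₁ c₂)) = 0 := by
  ext x
  simp [funext (pd_affine2 c₀ c₁ c₂ i), pd]

theorem integral_affine2_mul_pd_pd {g : E2 → ℝ} (hg : ContDiff ℝ 2 g)
    (hgs : HasCompactSupport g) (i j : Fin 2) :
    ∫ x, affine2 c₀ c₁ c₂ x * pd i (pd j g) x = 0 := by
  simp [integral_mul_pd_pd (contDiff_affine2 c₀ c₁ c₂) hg hgs, pd_pd_affine2]

end Affine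

section SecondDivergence

variable {W : E2 → Mat2}

theorem HasCompactSupport.matrix_entry (hW : HasCompactSupport W) (k l : Fin 2) :
    HasCompactSupport fun x => W x k l :=
  hW.comp_left (g := fun M : Mat2 => M k l) rfl

theorem support_div2Mat_subset : Function.support (div2Mat W) ⊆ tsupport W := by
  intro x hx
  by_contra hxW
  have hzero (i j k l : Fin 2) : pd i (pd j fun y => W y k l) x = 0 :=
    Function.notMem_support.mp fun h =>
      hxW (tsupport_comp_subset (g := fun M : Mat2 => M k l) rfl W (support_pd_pd_subset i j h))
  exact hx (by simp [div2Mat, hzero])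

theorem continuous_div2Mat (hW : ∀ k l, ContDiff ℝ 2 fun x => W x k l) :
    Continuous (div2Mat W) := by
  have hterm (i j k l : Fin 2) := continuous_pd_pd (hW k l) i j
  exact ((hterm 0 0 0 0).add (hterm 1 1 1 1)).add (continuous_const.mul (hterm 0 1 0 1))

theorem integral_affine2_mul_div2Mat (c₀ c₁ c₂ : ℝ)
    (hW : ∀ k l, ContDiff ℝ 2 fun x => W x k l) (hWs : HasCompactSupport W) :
    ∫ x, affine2 c₀ c₁ c₂ x * div2Mat W x = 0 := by
  have hint (i j k l : Fin 2) :
      Integrable fun x => affine2 c₀ c₁ c₂ x * pd i (pd j fun y => W y k l) x :=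
    ((continuous_affine2 c₀ c₁ c₂).mul
      (continuous_pd_pd (hW k l) i j)).integrable_of_hasCompactSupport
      (hasCompactSupport_pd (hasCompactSupport_pd (hWs.matrix_entry k l) j) i).mul_left
  have hzero (i j k l : Fin 2) := integral_affine2_mul_pd_pd c₀ c₁ c₂ (hW k l)
    (hWs.matrix_entry k l) i j
  simp only [div2Mat, mul_add, mul_left_comm _ (2 : ℝ)]
  rw [integral_add ?_ ((hint 0 1 0 1).const_mul 2), integral_add (hint 0 0 0 0) (hint 1 1 1 1),
    integral_const_mul, hzero, hzero, hzero]
  · norm_num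
  · exact (hint 0 0 0 0).add (hint 1 1 1 1)

theorem setIntegral_add_affine2_mul_div2Mat {Ω : Set E2} {u : E2 → ℝ} (c₀ c₁ c₂ : ℝ)
    (hW : Cc2Sym Ω W) (hu : IntegrableOn u Ω) :
    ∫ x in Ω, (u x + affine2 c₀ c₁ c₂ x) * div2Mat W x = ∫ x in Ω, u x * div2Mat W x := by
  obtain ⟨hW2, hWs, hWΩ, -⟩ := hW
  have hcont := continuous_div2Mat hW2
  have hsupp : HasCompactSupport (div2Mat W) := hWs.mono' support_div2Mat_subset
  obtain ⟨C, hC⟩ := hsupp.exists_bound_of_continuous hcont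
  have hu' : IntegrableOn (fun x => u x * div2Mat W x) Ω :=
    hu.mul_bdd hcont.aestronglyMeasurable.restrict (Eventually.of_forall hC)
  have haff : Integrable fun x => affine2 c₀ c₁ c₂ x * div2Mat W x :=
    ((continuous_affine2 c₀ c₁ c₂).mul hcont).integrable_of_hasCompactSupport
      hsupp.mul_left
  have haffΩ : ∫ x in Ω, affine2 c₀ c₁ c₂ x * div2Mat W x = 0 := by
    rw [setIntegral_eq_integral_of_forall_compl_eq_zero fun x hx => ?_]
    · exact integral_affine2_mul_div2Mat c₀ c₁ c₂ hW2 hWs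
    · rw [Function.notMem_support.mp fun h => hx (hWΩ (support_div2Mat_subset h)), mul_zero]
  simp only [add_mul]
  rw [integral_add hu' haff.integrableOn, haffΩ, add_zero]

end SecondDivergence

theorem dtgv2_add_affine_general (Ω : Set E2) (a θ l0 l1 : ℝ) (u : E2 → ℝ) (hu : IntegrableOn u Ω)
    (c₀ c₁ c₂ : ℝ) :
    DTGV2 Ω a θ l0 l1 (fun x => u x + (c₀ + c₁ * x 0 + c₂ * x 1)) =
      DTGV2 Ω a θ l0 l1 u := by
  unfold DTGV2
  refine iSup_congr fun W => iSup_congr fun hW => ?_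
  exact congrArg ENNReal.ofReal (setIntegral_add_affine2_mul_div2Mat c₀ c₁ c₂ hW.1 hu)

/-- `DTGV²_λ` is invariant under addition of affine functions. -/
theorem dtgv2_add_affine (Ω : Set E2) (hΩo : IsOpen Ω) (hΩb : Bornology.IsBounded Ω)
    (a θ l0 l1 : ℝ) (ha : 0 < a) (ha1 : a ≤ 1) (hl0 : 0 < l0) (hl1 : 0 < l1)
    (u : E2 → ℝ) (hu : IntegrableOn u Ω) (c₀ c₁ c₂ : ℝ) :
    DTGV2 Ω a θ l0 l1 (fun x => u x + (c₀ + c₁ * x 0 + c₂ * x 1)) =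
      DTGV2 Ω a θ l0 l1 u :=
  dtgv2_add_affine_general Ω a θ l0 l1 u hu c₀ c₁ c₂
end
end

section
/- Lower intermediate bound in Proposition 4.2 (second order): for every u ∈ L¹(Ω), TGV²_{a²λ}(u) ≤ DTGV²_λ(u), where a²λ = (a²λ₀, a²λ₁). -/
open MeasureTheory Filter
open scoped ENNReal Topology Pointwise

noncomputable section

/-! The ellipse `E^{a,θ}` has semi-axes `1` and `a ≤ 1`, so it contains the ball of radius `a`,
hence `a² B`, and row by row `a² B_{2×2} ⊆ E^{a,θ}_{2×2}`. So every field admissible for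
`TGV²_{a²λ}` is admissible for `DTGV²_λ`: the first supremum is over a smaller index set. -/

lemma vec2_smul (c x y : ℝ) : vec2 (c * x) (c * y) = c • vec2 x y := by
  ext i; fin_cases i <;> simp [vec2]

lemma norm_sq_eq_rotated_sq (v : E2) (θ : ℝ) :
    ‖v‖ ^ 2 = (v 0 * Real.cos θ + v 1 * Real.sin θ) ^ 2 +
      (-(v 0) * Real.sin θ + v 1 * Real.cos θ) ^ 2 := by
  rw [EuclideanSpace.norm_sq_eq, Fin.sum_univ_two, Real.norm_eq_abs, Real.norm_eq_abs, sq_abs,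
    sq_abs]
  linear_combination -(v 0 ^ 2 + v 1 ^ 2) * Real.sin_sq_add_cos_sq θ

lemma closedBall_subset_ellip {a : ℝ} (ha : 0 < a) (ha1 : a ≤ 1) (θ : ℝ) :
    Metric.closedBall (0 : E2) a ⊆ Ellip a θ := by
  intro v hv
  rw [mem_closedBall_zero_iff] at hv
  set p := v 0 * Real.cos θ + v 1 * Real.sin θ
  set q := -(v 0) * Real.sin θ + v 1 * Real.cos θ
  have hpq : p ^ 2 + q ^ 2 ≤ a ^ 2 := by
    rw [← norm_sq_eq_rotated_sq v θ]
    exact pow_le_pow_left₀ (norm_nonneg v) hv 2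
  have ha2 : 0 < a ^ 2 := by positivity
  show p ^ 2 + (q / a) ^ 2 ≤ 1
  calc p ^ 2 + (q / a) ^ 2 ≤ (p ^ 2 + q ^ 2) / a ^ 2 := by
        rw [div_pow, add_div]
        gcongr
        exact le_div_self (sq_nonneg p) ha2 (pow_le_one₀ ha.le ha1)
    _ ≤ 1 := (div_le_one ha2).mpr hpq

lemma rowcol_mono {S T : Set E2} (h : S ⊆ T) : rowcol S ⊆ rowcol T :=
  fun _ ⟨hs, hr, hc⟩ => ⟨hs, fun i => h (hr i), fun j => h (hc j)⟩

lemma smul_rowcol_subset (c : ℝ) (S : Set E2) : c • rowcol S ⊆ rowcol (c • S) := by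
  rintro _ ⟨V, ⟨hs, hr, hc⟩, rfl⟩
  refine ⟨by rw [Matrix.IsSymm, Matrix.transpose_smul, hs], fun i => ?_, fun j => ?_⟩
  · simpa only [Matrix.smul_apply, smul_eq_mul, vec2_smul] using
      Set.smul_mem_smul_set (a := c) (hr i)
  · simpa only [Matrix.smul_apply, smul_eq_mul, vec2_smul] using
      Set.smul_mem_smul_set (a := c) (hc j)

lemma sq_smul_closedBall_subset_ellip {a : ℝ} (ha : 0 < a) (ha1 : a ≤ 1) (θ : ℝ) :
    a ^ 2 • Metric.closedBall (0 : E2) 1 ⊆ Ellip a θ := by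
  rw [smul_closedBall _ _ zero_le_one, smul_zero, Real.norm_eq_abs, abs_of_pos (by positivity),
    mul_one]
  exact (Metric.closedBall_subset_closedBall (by nlinarith)).trans
    (closedBall_subset_ellip ha ha1 θ)

lemma smul_ballM_subset_smul_ellipM {a : ℝ} (ha : 0 < a) (ha1 : a ≤ 1) (θ l : ℝ) :
    (a ^ 2 * l) • BallM ⊆ l • EllipM a θ := by
  rw [mul_comm, mul_smul]
  exact Set.smul_set_mono
    ((smul_rowcol_subset _ _).trans (rowcol_mono (sq_smul_closedBall_subset_ellip ha ha1 θ)))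

lemma closedBall_subset_smul_ellip {a l : ℝ} (ha : 0 < a) (ha1 : a ≤ 1) (hl : 0 ≤ l)
    (θ : ℝ) :
    Metric.closedBall (0 : E2) (a ^ 2 * l) ⊆ l • Ellip a θ := by
  calc Metric.closedBall (0 : E2) (a ^ 2 * l) ⊆ Metric.closedBall 0 (l * a) :=
        Metric.closedBall_subset_closedBall
          (by nlinarith [mul_nonneg (mul_nonneg ha.le (sub_nonneg.2 ha1)) hl])
    _ = l • Metric.closedBall 0 a := by
        rw [smul_closedBall _ _ ha.le, smul_zero, Real.norm_eq_abs, abs_of_nonneg hl]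
    _ ⊆ l • Ellip a θ := Set.smul_set_mono (closedBall_subset_ellip ha ha1 θ)

theorem tgv2_scaled_le_dtgv2_general (Ω : Set E2)
    (a θ l0 l1 : ℝ) (ha : 0 < a) (ha1 : a ≤ 1) (hl1 : 0 < l1)
    (u : E2 → ℝ) :
    TGV2 Ω (a ^ 2 * l0) (a ^ 2 * l1) u ≤ DTGV2 Ω a θ l0 l1 u :=
  biSup_mono fun _ ⟨hW, hW0, hW1⟩ =>
    ⟨hW, fun x hx => smul_ballM_subset_smul_ellipM ha ha1 θ l0 (hW0 x hx),
      fun x hx => closedBall_subset_smul_ellip ha ha1 hl1.le θ (hW1 x hx)⟩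

/-- `TGV²_{a²λ}(u) ≤ DTGV²_λ(u)`. -/
theorem tgv2_scaled_le_dtgv2 (Ω : Set E2) (hΩo : IsOpen Ω) (hΩb : Bornology.IsBounded Ω)
    (a θ l0 l1 : ℝ) (ha : 0 < a) (ha1 : a ≤ 1) (hl0 : 0 < l0) (hl1 : 0 < l1)
    (u : E2 → ℝ) (hu : IntegrableOn u Ω) :
    TGV2 Ω (a ^ 2 * l0) (a ^ 2 * l1) u ≤ DTGV2 Ω a θ l0 l1 u :=
  tgv2_scaled_le_dtgv2_general Ω a θ l0 l1 ha ha1 hl1 u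
end
end

section
/- Coercivity transfer from TGV² to DTGV²: let H : L²(Ω) → 𝒫¹(Ω) be a continuous linear projection onto the space 𝒫¹(Ω) of affine functions on Ω, and suppose there exists C > 0 such that ‖u‖_{L²(Ω)} ≤ C · TGV²_λ(u) for all u ∈ ker H. Then for all u ∈ ker H, ‖u‖_{L²(Ω)} ≤ (C · max(λ₀,λ₁) / (a² · min(λ₀,λ₁))) · DTGV²_λ(u). -/
open MeasureTheory Filter
open scoped ENNReal Topology Pointwise

noncomputable section

/-- `u` agrees a.e. on `Ω` with an affine function. -/
def IsAffineAE (Ω : Set E2) (u : E2 → ℝ) : Prop :=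
  ∃ c₀ c₁ c₂ : ℝ, ∀ᵐ x ∂(volume.restrict Ω), u x = c₀ + c₁ * x 0 + c₂ * x 1

lemma closedBall_subset_Ellip {a : ℝ} (θ : ℝ) (ha : 0 < a) (ha1 : a ≤ 1) :
    Metric.closedBall (0 : E2) a ⊆ Ellip a θ := by
  intro v hv
  set p := v 0 * Real.cos θ + v 1 * Real.sin θ
  set q := -(v 0) * Real.sin θ + v 1 * Real.cos θ
  have hpq : p ^ 2 + q ^ 2 = ‖v‖ ^ 2 := by
    rw [EuclideanSpace.norm_sq_eq, Fin.sum_univ_two, Real.norm_eq_abs, Real.norm_eq_abs, sq_abs,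
      sq_abs]
    linear_combination (v 0 ^ 2 + v 1 ^ 2) * Real.sin_sq_add_cos_sq θ
  have hv : ‖v‖ ^ 2 ≤ a ^ 2 := pow_le_pow_left₀ (norm_nonneg v) (mem_closedBall_zero_iff.mp hv) 2
  show p ^ 2 + (q / a) ^ 2 ≤ 1
  have hp : p ^ 2 ≤ p ^ 2 / a ^ 2 :=
    le_div_self (sq_nonneg p) (by positivity) (pow_le_one₀ ha.le ha1)
  calc p ^ 2 + (q / a) ^ 2 ≤ (p ^ 2 + q ^ 2) / a ^ 2 := by rw [div_pow, add_div]; linarith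
    _ ≤ 1 := by rw [div_le_one (by positivity)]; linarith

lemma smul_BallM_subset_EllipM {a : ℝ} (θ : ℝ) (ha : 0 < a) (ha1 : a ≤ 1) :
    a • BallM ⊆ EllipM a θ :=
  calc a • BallM ⊆ rowcol (a • Metric.closedBall 0 1) := smul_rowcol_subset a _
    _ = rowcol (Metric.closedBall 0 a) := by rw [smul_unitClosedBall_of_nonneg ha.le]
    _ ⊆ EllipM a θ := rowcol_mono (closedBall_subset_Ellip θ ha ha1)

lemma smul_closedBall_subset_smul_Ellip {a r : ℝ} (θ : ℝ) (ha : 0 < a) (ha1 : a ≤ 1)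
    (hr : 0 ≤ r) : a • Metric.closedBall (0 : E2) r ⊆ r • Ellip a θ :=
  calc a • Metric.closedBall (0 : E2) r = r • Metric.closedBall 0 a := by
        rw [smul_closedBall _ _ hr, smul_closedBall _ _ ha.le, smul_zero, smul_zero,
          Real.norm_of_nonneg ha.le, Real.norm_of_nonneg hr, mul_comm]
    _ ⊆ r • Ellip a θ := Set.smul_set_mono (closedBall_subset_Ellip θ ha ha1)

lemma pd_const_mul (i : Fin 2) (c : ℝ) (f : E2 → ℝ) :
    pd i (fun y => c * f y) = fun x => c * pd i f x := by
  ext x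
  change fderiv ℝ (c • f) x _ = _
  rw [fderiv_const_smul_field]
  rfl

lemma divMat_const_smul (c : ℝ) (W : E2 → Mat2) : divMat (c • W) = c • divMat W := by
  ext1 x
  simp only [divMat, Pi.smul_apply, Matrix.smul_apply, smul_eq_mul, pd_const_mul, ← mul_add,
    vec2_smul]

lemma div2Mat_const_smul (c : ℝ) (W : E2 → Mat2) : div2Mat (c • W) = c • div2Mat W := by
  ext1 x
  simp only [div2Mat, Pi.smul_apply, Matrix.smul_apply, smul_eq_mul, pd_const_mul]
  ring

lemma Cc2Sym.const_smul {Ω : Set E2} {W : E2 → Mat2} (hW : Cc2Sym Ω W) (c : ℝ) :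
    Cc2Sym Ω (c • W) :=
  ⟨fun i j => (hW.1 i j).const_smul c, hW.2.1.smul_left (f := fun _ => c),
    (tsupport_smul_subset_right (fun _ => c) W).trans hW.2.2.1, fun x => (hW.2.2.2 x).smul c⟩

theorem TGV2_le_inv_mul_DTGV2 (Ω : Set E2) {a l0 l1 : ℝ} (θ : ℝ) (ha : 0 < a) (ha1 : a ≤ 1)
    (hl1 : 0 ≤ l1) (u : E2 → ℝ) :
    TGV2 Ω l0 l1 u ≤ ENNReal.ofReal a⁻¹ * DTGV2 Ω a θ l0 l1 u := by
  refine iSup₂_le fun W ⟨hW, hW0, hW1⟩ => ?_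
  have hadm : a • W ∈ {W : E2 → Mat2 | Cc2Sym Ω W ∧ (∀ x ∈ Ω, W x ∈ l0 • EllipM a θ) ∧
      ∀ x ∈ Ω, divMat W x ∈ l1 • Ellip a θ} := by
    refine ⟨hW.const_smul a, fun x hx => ?_, fun x hx => ?_⟩
    · obtain ⟨V, hV, hVW⟩ := hW0 x hx
      rw [Pi.smul_apply, ← hVW, smul_comm]
      exact Set.smul_mem_smul_set (smul_BallM_subset_EllipM θ ha ha1 (Set.smul_mem_smul_set hV))
    · rw [divMat_const_smul, Pi.smul_apply]
      exact smul_closedBall_subset_smul_Ellip θ ha ha1 hl1 (Set.smul_mem_smul_set (hW1 x hx))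
  have hint : ∫ x in Ω, u x * div2Mat W x = a⁻¹ * ∫ x in Ω, u x * div2Mat (a • W) x := by
    simp only [div2Mat_const_smul, Pi.smul_apply, smul_eq_mul, mul_left_comm (u _) a]
    rw [integral_const_mul, inv_mul_cancel_left₀ ha.ne']
  rw [hint, ENNReal.ofReal_mul (inv_nonneg.mpr ha.le)]
  gcongr
  exact le_iSup₂ (f := fun (W : E2 → Mat2) _ => ENNReal.ofReal (∫ x in Ω, u x * div2Mat W x))
    (a • W) hadm

lemma inv_le_div_sq_mul {a m M : ℝ} (ha : 0 < a) (ha1 : a ≤ 1) (hm : 0 < m) (hmM : m ≤ M) :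
    a⁻¹ ≤ M / (a ^ 2 * m) := by
  rw [le_div_iff₀ (by positivity)]
  calc a⁻¹ * (a ^ 2 * m) = a * m := by field_simp
    _ ≤ m := mul_le_of_le_one_left hm.le ha1
    _ ≤ M := hmM

theorem coercivity_transfer_general (Ω : Set E2)
    (a θ l0 l1 C : ℝ) (ha : 0 < a) (ha1 : a ≤ 1) (hl0 : 0 < l0) (hl1 : 0 < l1)
    (hC : 0 < C)
    (H : Lp ℝ 2 (volume.restrict Ω) →L[ℝ] Lp ℝ 2 (volume.restrict Ω))
    (hcoer : ∀ u : Lp ℝ 2 (volume.restrict Ω), H u = 0 →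
      ENNReal.ofReal ‖u‖ ≤ ENNReal.ofReal C * TGV2 Ω l0 l1 u) :
    ∀ u : Lp ℝ 2 (volume.restrict Ω), H u = 0 →
      ENNReal.ofReal ‖u‖ ≤
        ENNReal.ofReal (C * max l0 l1 / (a ^ 2 * min l0 l1)) * DTGV2 Ω a θ l0 l1 u := by
  intro u hu
  have hconst : C * a⁻¹ ≤ C * max l0 l1 / (a ^ 2 * min l0 l1) := by
    rw [mul_div_assoc]
    gcongr
    exact inv_le_div_sq_mul ha ha1 (lt_min hl0 hl1) min_le_max
  calc ENNReal.ofReal ‖u‖ ≤ ENNReal.ofReal C * TGV2 Ω l0 l1 u := hcoer u hu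
    _ ≤ ENNReal.ofReal C * (ENNReal.ofReal a⁻¹ * DTGV2 Ω a θ l0 l1 u) := by
        gcongr
        exact TGV2_le_inv_mul_DTGV2 Ω θ ha ha1 hl1.le u
    _ = ENNReal.ofReal (C * a⁻¹) * DTGV2 Ω a θ l0 l1 u := by
        rw [ENNReal.ofReal_mul hC.le, mul_assoc]
    _ ≤ ENNReal.ofReal (C * max l0 l1 / (a ^ 2 * min l0 l1)) * DTGV2 Ω a θ l0 l1 u := by
        gcongr

/-- coercivity transfer from `TGV²_λ` to `DTGV²_λ` on `ker H`. -/
theorem coercivity_transfer (Ω : Set E2) (hΩo : IsOpen Ω) (hΩc : IsConnected Ω)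
    (hΩb : Bornology.IsBounded Ω)
    (a θ l0 l1 C : ℝ) (ha : 0 < a) (ha1 : a ≤ 1) (hl0 : 0 < l0) (hl1 : 0 < l1)
    (hC : 0 < C)
    (H : Lp ℝ 2 (volume.restrict Ω) →L[ℝ] Lp ℝ 2 (volume.restrict Ω))
    (hHproj : ∀ u, H (H u) = H u)
    (hHrange : ∀ u, IsAffineAE Ω (H u))
    (hHfix : ∀ u : Lp ℝ 2 (volume.restrict Ω), IsAffineAE Ω u → H u = u)
    (hcoer : ∀ u : Lp ℝ 2 (volume.restrict Ω), H u = 0 →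
      ENNReal.ofReal ‖u‖ ≤ ENNReal.ofReal C * TGV2 Ω l0 l1 u) :
    ∀ u : Lp ℝ 2 (volume.restrict Ω), H u = 0 →
      ENNReal.ofReal ‖u‖ ≤
        ENNReal.ofReal (C * max l0 l1 / (a ^ 2 * min l0 l1)) * DTGV2 Ω a θ l0 l1 u :=
  coercivity_transfer_general Ω a θ l0 l1 C ha ha1 hl0 hl1 hC H hcoer
end
end
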